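/- Let G act on (X,μ) by measure-preserving transformations and let α be a finite generating partition. Then the set of finite partitions combinatorially equivalent to α is dense (in the Rokhlin metric) in the set of all finite generating partitions. -/

import Mathlib

open MeasureTheory Real
open scoped symmDiff ENNReal

namespace Bowen

variable {X : Type*} [MeasurableSpace X]

/-- Shannon entropy of the (countable) partition of `X` into fibers of `α`. -/
noncomputable def entropy {ι : Type*} (μ : Measure X) (α : X → ι) : ℝ :=
  ∑' i, Real.negMulLog (μ (α ⁻¹' {i})).toReal

/-- Conditional entropy `H(α|β)` of the fiber partition of `α` given that of `β`. -/
noncomputable def condEntropy {ι κ : Type*} (μ : Measure X) (α : X → ι) (β : X → κ) : ℝ :=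
  ∑' p : ι × κ,
    -((μ (α ⁻¹' {p.1} ∩ β ⁻¹' {p.2})).toReal *
      Real.log ((μ (α ⁻¹' {p.1} ∩ β ⁻¹' {p.2})).toReal / (μ (β ⁻¹' {p.2})).toReal))

/-- The Rokhlin distance `d(α,β) = H(α|β) + H(β|α)`. -/
noncomputable def rokhlin {ι κ : Type*} (μ : Measure X) (α : X → ι) (β : X → κ) : ℝ :=
  condEntropy μ α β + condEntropy μ β α

/-- A finite measurable partition, presented as a measurable map to `ℕ` with finite range. -/
def IsFinPart (α : X → ℕ) : Prop := Measurable α ∧ (Set.range α).Finite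

/-- `α` refines `β` (mod null sets): `β` factors a.e. through `α`. -/
def RefinesI {ι κ : Type*} (μ : Measure X) (α : X → ι) (β : X → κ) : Prop :=
  ∃ h : ι → κ, ∀ᵐ x ∂μ, β x = h (α x)

/-- The join `α ∨ β` of two `ℕ`-indexed partitions, encoded via `Nat.pair`. -/
def joinN (α β : X → ℕ) : X → ℕ := fun x => Nat.pair (α x) (β x)

/-- The translated partition `gα`, with atoms `gA = {x | g⁻¹x ∈ A}` for atoms `A` of `α`. -/
def smulPart {G : Type*} [Group G] [MulAction G X] {ι : Type*} (g : G) (α : X → ι) : X → ι :=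
  fun x => α (g⁻¹ • x)

/-- Join of a list of `ℕ`-indexed partitions. -/
def joinList (l : List (X → ℕ)) : X → ℕ :=
  l.foldr (fun a r x => Nat.pair (a x) (r x)) (fun _ => 0)

/-- The join `α^F = ⋁_{g ∈ F} gα` over a finite set of group elements. -/
noncomputable def joinOver {G : Type*} [Group G] [MulAction G X] (F : Finset G) (α : X → ℕ) : X → ℕ :=
  joinList (F.toList.map (fun g => smulPart g α))

/-- The smallest `G`-invariant σ-algebra containing the partition `α`. -/
def genSA (G : Type*) [Group G] [MulAction G X] {ι : Type*} (α : X → ι) :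
    MeasurableSpace X :=
  MeasurableSpace.generateFrom {s | ∃ (g : G) (i : ι), s = {x | α (g⁻¹ • x) = i}}

/-- `α` is a generating partition: every measurable set agrees mod `μ`-null sets with a set
in the smallest `G`-invariant σ-algebra containing `α`. -/
def IsGenerating (G : Type*) [Group G] [MulAction G X] {ι : Type*} (μ : Measure X)
    (α : X → ι) : Prop :=
  ∀ s : Set X, MeasurableSet s → ∃ t : Set X, MeasurableSet[genSA G α] t ∧ μ (s ∆ t) = 0

/-- Combinatorial equivalence: `α ≤ β^L` and `β ≤ α^M` for some finite `L, M ⊆ G`. -/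
def CombEquiv (G : Type*) [Group G] [MulAction G X] (μ : Measure X) (α β : X → ℕ) : Prop :=
  ∃ L M : Finset G, RefinesI μ (joinOver L β) α ∧ RefinesI μ (joinOver M α) β

/-- `α` and `β` induce the same partition mod null sets. -/
def SamePart (μ : Measure X) (α β : X → ℕ) : Prop := RefinesI μ α β ∧ RefinesI μ β α

/-- `σ` is a simple splitting of `α`: `σ = α ∨ sβ` (as partitions, mod null sets) for some
`s ∈ S` and some coarsening `β` of `α`. -/
def SimpleSplit {G : Type*} [Group G] [MulAction G X] (μ : Measure X) (S : Finset G)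
    (σ α : X → ℕ) : Prop :=
  ∃ s ∈ S, ∃ β : X → ℕ, RefinesI μ α β ∧ SamePart μ σ (joinN α (smulPart s β))

/-- `σ` is a splitting of `α`: obtained from `α` by finitely many simple splittings. -/
def IsSplitting {G : Type*} [Group G] [MulAction G X] (μ : Measure X) (S : Finset G)
    (σ α : X → ℕ) : Prop :=
  Relation.ReflTransGen (fun a b => SimpleSplit μ S b a) α σ

/-- The ball of radius `n` about the identity for the word metric of `S`:
all products of at most `n` elements of `S`. -/
def ballF {G : Type*} [Group G] [DecidableEq G] (S : Finset G) : ℕ → Finset G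
  | 0 => {1}
  | n + 1 => ballF S n ∪ (S ×ˢ ballF S n).image (fun p => p.1 * p.2)

/-- The Cayley graph of `(G,S)` (as a simple graph). -/
def cayley {G : Type*} [Group G] (S : Finset G) : SimpleGraph G :=
  SimpleGraph.fromRel (fun g h => g⁻¹ * h ∈ S)

/-- The symmetric generating set `S = {s₁^{±1},...,s_r^{±1}}` of the rank `r` free group. -/
noncomputable def genS (r : ℕ) : Finset (FreeGroup (Fin r)) :=
  letI := Classical.decEq (FreeGroup (Fin r))
  (Finset.univ.image fun i : Fin r => FreeGroup.of i) ∪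
    (Finset.univ.image fun i : Fin r => (FreeGroup.of i)⁻¹)

/-- The word-metric ball of radius `n` about `e` in the rank `r` free group. -/
noncomputable def ballFree (r : ℕ) (n : ℕ) : Finset (FreeGroup (Fin r)) :=
  letI := Classical.decEq (FreeGroup (Fin r))
  ballF (genS r) n

/-- Bowen's functional `F(α) = (1-2r)H(α) + ∑ᵢ H(α ∨ sᵢα)`. -/
noncomputable def Ffun (r : ℕ) {X : Type*} [MeasurableSpace X]
    [MulAction (FreeGroup (Fin r)) X] (μ : Measure X) (α : X → ℕ) : ℝ :=
  (1 - 2 * (r : ℝ)) * entropy μ α +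
    ∑ i : Fin r, entropy μ (joinN α (smulPart (FreeGroup.of i) α))

/-- Conditional entropy of the partition `α` relative to a sub-σ-algebra `m`:
`H(α|m) = ∫ -log μ(A_x|m)(x) dμ(x)`. -/
noncomputable def condEntropySigma (μ : Measure X) (α : X → ℕ) (m : MeasurableSpace X) : ℝ :=
  ∫ x, -Real.log ((μ[Set.indicator (α ⁻¹' {α x}) (fun _ => (1 : ℝ))|m]) x) ∂μ

end Bowen

open Bowen

/-!
Since `β` is generating, `α` is guessed up to small measure by `h (β^K)` for a finite window
`K ∋ 1`; since `α` is generating, `β` is approximated by some `β' = f (α^F)`. Let `γ = β' ∨ c`,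
where `c = 0` where the guess `h (β'^K)` for `α` is right and `c = α + 1` where it is wrong.
Then `α` is read off from `γ^K` (as `h (β'^K)` or `c - 1`), and `γ` is read off from `α^(KF)`,
so `γ` is combinatorially equivalent to `α`. The guess fails only where it fails for `β`, or
where `β' ≠ β` at one of the `|K|` translates; by invariance of `μ` this has small measure, so
`γ` agrees with `β` (after relabelling) off a small set. The number of atoms of `γ` is bounded
in terms of `α` and `β` alone, and for partitions with a bounded number of atoms, agreement off a
set of measure `η` forces `H(γ|β), H(β|γ) = O(η + η log (1/η))`.
-/

open Function
open scoped Pointwise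

namespace Bowen

section Join

variable {X : Type*} {G : Type*} [Group G] [MulAction G X]

theorem _root_.Function.FactorsThrough.trans {α β γ δ : Type*} {f : α → β} {g : α → γ}
    {h : α → δ} (hgf : g.FactorsThrough f) (hfh : f.FactorsThrough h) : g.FactorsThrough h :=
  fun _ _ hxy => hgf (hfh hxy)

theorem joinN_factorsThrough {ι : Type*} {a b : X → ℕ} {c : X → ι} (ha : a.FactorsThrough c)
    (hb : b.FactorsThrough c) : (joinN a b).FactorsThrough c :=
  fun _ _ hxy => congrArg₂ Nat.pair (ha hxy) (hb hxy)

theorem joinList_apply_eq_iff {l : List (X → ℕ)} {x y : X} :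
    joinList l x = joinList l y ↔ ∀ a ∈ l, a x = a y := by
  induction l with
  | nil => simp [joinList]
  | cons a l ih =>
    change Nat.pair (a x) (joinList l x) = Nat.pair (a y) (joinList l y) ↔ _
    rw [Nat.pair_eq_pair, ih, List.forall_mem_cons]

theorem joinOver_apply_eq_iff {F : Finset G} {σ : X → ℕ} {x y : X} :
    joinOver F σ x = joinOver F σ y ↔ ∀ g ∈ F, σ (g⁻¹ • x) = σ (g⁻¹ • y) := by
  simp [joinOver, joinList_apply_eq_iff, smulPart]

theorem joinOver_apply_congr {F : Finset G} {φ ψ : X → ℕ} {x : X}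
    (h : ∀ g ∈ F, φ (g⁻¹ • x) = ψ (g⁻¹ • x)) : joinOver F φ x = joinOver F ψ x := by
  have hlist : ∀ l : List (X → ℕ), joinList l x = (l.map (· x)).foldr Nat.pair 0 := by
    intro l; induction l <;> simp_all [joinList]
  simp only [joinOver, hlist, List.map_map]
  exact congrArg _ (List.map_congr_left fun g hg => h g (by simpa using hg))

theorem smulPart_one {ι : Type*} (σ : X → ι) : smulPart (1 : G) σ = σ := by
  ext x; simp [smulPart]

theorem joinOver_factorsThrough_iff {ι : Type*} {F : Finset G} {σ : X → ℕ} {τ : X → ι} :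
    (joinOver F σ).FactorsThrough τ ↔ ∀ g ∈ F, (smulPart g σ).FactorsThrough τ := by
  simp only [FactorsThrough, joinOver_apply_eq_iff, smulPart]
  grind

theorem smulPart_factorsThrough_joinOver {F : Finset G} {g : G} (hg : g ∈ F) (σ : X → ℕ) :
    (smulPart g σ).FactorsThrough (joinOver F σ) :=
  joinOver_factorsThrough_iff.1 FactorsThrough.rfl g hg

theorem joinOver_factorsThrough_of_subset {F F' : Finset G} (h : F ⊆ F') (σ : X → ℕ) :
    (joinOver F σ).FactorsThrough (joinOver F' σ) :=
  joinOver_factorsThrough_iff.2 fun _ hg => smulPart_factorsThrough_joinOver (h hg) σ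

theorem _root_.Function.FactorsThrough.joinOver {φ ψ : X → ℕ} (h : φ.FactorsThrough ψ)
    (K : Finset G) : (joinOver K φ).FactorsThrough (joinOver K ψ) :=
  joinOver_factorsThrough_iff.2 fun _ hg =>
    (h.comp_right _).trans (smulPart_factorsThrough_joinOver hg ψ)

theorem smulPart_joinOver_factorsThrough {F F' : Finset G} {k : G} (h : ∀ g ∈ F, k * g ∈ F')
    (σ : X → ℕ) : (smulPart k (joinOver F σ)).FactorsThrough (joinOver F' σ) := by
  intro x y hxy
  simp only [smulPart, joinOver_apply_eq_iff] at hxy ⊢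
  intro g hg
  simpa [mul_smul] using hxy (k * g) (h g hg)

theorem _root_.Function.FactorsThrough.joinOver_mul [DecidableEq G] {F : Finset G} {σ φ : X → ℕ}
    (h : φ.FactorsThrough (joinOver F σ)) (K : Finset G) :
    (joinOver K φ).FactorsThrough (joinOver (K * F) σ) :=
  joinOver_factorsThrough_iff.2 fun _ hk => (h.comp_right _).trans
    (smulPart_joinOver_factorsThrough (fun _ hg => Finset.mul_mem_mul hk hg) σ)

end Join

section Cylinders

variable {X : Type*} {G : Type*} [Group G] [MulAction G X]

def cylinders (G : Type*) [Group G] [MulAction G X] (σ : X → ℕ) : Set (Set X) :=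
  {D | ∃ (F : Finset G) (J : Set ℕ), D = joinOver F σ ⁻¹' J}

theorem _root_.Function.FactorsThrough.preimage_eq {α β γ : Type*} {f : α → β} {g : α → γ}
    (h : g.FactorsThrough f) (J : Set γ) : g ⁻¹' J = f ⁻¹' {b | ∃ a, f a = b ∧ g a ∈ J} := by
  ext x
  exact ⟨fun hx => ⟨x, rfl, hx⟩, fun ⟨y, hyx, hy⟩ => show g x ∈ J from h hyx ▸ hy⟩

theorem preimage_mem_cylinders {κ : Type*} {σ : X → ℕ} {F : Finset G} {τ : X → κ}
    (h : τ.FactorsThrough (joinOver F σ)) (J : Set κ) : τ ⁻¹' J ∈ cylinders G σ :=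
  ⟨F, _, h.preimage_eq J⟩

theorem isSetRing_cylinders [DecidableEq G] (σ : X → ℕ) : IsSetRing (cylinders G σ) := by
  have pair_mem : ∀ (F₁ F₂ : Finset G) (J : Set (ℕ × ℕ)),
      (fun x => (joinOver F₁ σ x, joinOver F₂ σ x)) ⁻¹' J ∈ cylinders G σ := fun F₁ F₂ =>
    preimage_mem_cylinders (F := F₁ ∪ F₂) fun _ _ hxy => Prod.ext
      (joinOver_factorsThrough_of_subset Finset.subset_union_left σ hxy)
      (joinOver_factorsThrough_of_subset Finset.subset_union_right σ hxy)
  refine ⟨⟨∅, ∅, rfl⟩, ?_, ?_⟩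
  · rintro _ _ ⟨F₁, J₁, rfl⟩ ⟨F₂, J₂, rfl⟩
    exact pair_mem F₁ F₂ {p | p.1 ∈ J₁ ∨ p.2 ∈ J₂}
  · rintro _ _ ⟨F₁, J₁, rfl⟩ ⟨F₂, J₂, rfl⟩
    exact pair_mem F₁ F₂ {p | p.1 ∈ J₁ ∧ p.2 ∉ J₂}

theorem measurable_joinN {m : MeasurableSpace X} {a b : X → ℕ} (ha : Measurable[m] a)
    (hb : Measurable[m] b) : Measurable[m] (joinN a b) :=
  (Measurable.of_discrete (f := fun p : ℕ × ℕ => Nat.pair p.1 p.2)).comp (ha.prodMk hb)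

theorem measurable_joinOver {m : MeasurableSpace X} {F : Finset G} {σ : X → ℕ}
    (h : ∀ g ∈ F, Measurable[m] (smulPart g σ)) : Measurable[m] (joinOver F σ) := by
  suffices ∀ l : List (X → ℕ), (∀ a ∈ l, Measurable[m] a) → Measurable[m] (joinList l) from
    this _ (by simpa [joinOver] using h)
  intro l hl
  induction l with
  | nil => exact measurable_const
  | cons a l ih => exact measurable_joinN (hl a (by simp)) (ih fun b hb => hl b (by simp [hb]))

theorem generateFrom_cylinders [DecidableEq G] (σ : X → ℕ) :
    MeasurableSpace.generateFrom (cylinders G σ) = genSA G σ := by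
  refine le_antisymm (MeasurableSpace.generateFrom_le ?_) (MeasurableSpace.generateFrom_le ?_)
  · rintro _ ⟨F, J, rfl⟩
    refine measurable_joinOver (fun g _ => ?_) (MeasurableSet.of_discrete (s := J))
    exact @measurable_to_countable' _ _ _ _ (genSA G σ) _ fun i =>
      MeasurableSpace.measurableSet_generateFrom ⟨g, i, rfl⟩
  · rintro _ ⟨g, i, rfl⟩
    exact MeasurableSpace.measurableSet_generateFrom <|
      preimage_mem_cylinders (smulPart_factorsThrough_joinOver (Finset.mem_singleton_self g) σ) {i}

end Cylinders

section Approximation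

variable {X : Type*} [MeasurableSpace X] {G : Type*} [Group G] [MulAction G X]

theorem genSA_le (hmeas : ∀ g : G, Measurable (g • · : X → X)) {σ : X → ℕ} (hσ : Measurable σ) :
    genSA G σ ≤ ‹MeasurableSpace X› :=
  MeasurableSpace.generateFrom_le <| by
    rintro _ ⟨g, i, rfl⟩
    exact hσ.comp (hmeas g⁻¹) (measurableSet_singleton i)

theorem exists_mem_cylinders_symmDiff_lt (μ : Measure X) [IsFiniteMeasure μ]
    (hmeas : ∀ g : G, Measurable (g • · : X → X)) {σ : X → ℕ} (hσ : Measurable σ) {t : Set X}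
    (ht : MeasurableSet[genSA G σ] t) {ε : ℝ≥0∞} (hε : 0 < ε) :
    ∃ D ∈ cylinders G σ, μ (D ∆ t) < ε := by
  classical
  -- Mathlib's approximation lemma is applied on the measurable space `genSA G σ` itself.
  have hle := genSA_le hmeas hσ
  have hcyl : ∀ D ∈ cylinders G σ, MeasurableSet[genSA G σ] D := fun D hD => by
    rw [← generateFrom_cylinders]; exact MeasurableSpace.measurableSet_generateFrom hD
  have huniv : Set.univ ∈ cylinders G σ := ⟨∅, Set.univ, rfl⟩
  obtain ⟨D, hD, hDt⟩ := exists_measure_symmDiff_lt_of_generateFrom_isSetRing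
    (mα := genSA G σ) (μ := μ.trim hle) (isSetRing_cylinders σ)
    ⟨{Set.univ}, Set.countable_singleton _, by simpa using huniv, by simp⟩
    (generateFrom_cylinders σ).symm ht hε
  exact ⟨D, hD, by rwa [trim_measurableSet_eq hle ((hcyl D hD).symmDiff ht)] at hDt⟩

theorem exists_measure_ne_comp_le {ι κ : Type*} [DecidableEq ι] (μ : Measure X) {ρ : X → ι}
    {τ : X → κ} {P : Finset ι} (hρP : ∀ x, ρ x ∈ P) (D : ι → Set X)
    (hD : ∀ i ∈ P, (· ∈ D i).FactorsThrough τ) (i₀ : ι) :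
    ∃ f : κ → ι, (∀ n, f n ∈ insert i₀ P) ∧
      μ {x | ρ x ≠ f (τ x)} ≤ ∑ i ∈ P, μ (D i ∆ (ρ ⁻¹' {i})) := by
  classical
  let f : κ → ι := fun n => if h : ∃ i ∈ P, ∃ y ∈ D i, τ y = n then h.choose else i₀
  refine ⟨f, fun n => ?_, ?_⟩
  · by_cases h : ∃ i ∈ P, ∃ y ∈ D i, τ y = n
    · simp only [f, dif_pos h]; exact Finset.mem_insert_of_mem h.choose_spec.1
    · simp [f, dif_neg h]
  refine (measure_mono fun x (hx : ρ x ≠ f (τ x)) => ?_).trans (measure_biUnion_finset_le _ _)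
  simp only [Set.mem_iUnion, exists_prop]
  by_cases h : ∃ i ∈ P, ∃ y ∈ D i, τ y = τ x
  · obtain ⟨hiP, y, hy, hyx⟩ := h.choose_spec
    have hfx : f (τ x) = h.choose := dif_pos h
    refine ⟨h.choose, hiP, Or.inl ⟨(hD _ hiP hyx).mp hy, ?_⟩⟩
    exact fun hρ => hx (hρ.trans hfx.symm)
  · exact ⟨ρ x, hρP x, Or.inr ⟨rfl, fun hxD => h ⟨ρ x, hρP x, x, hxD, rfl⟩⟩⟩

theorem exists_joinOver_predictor (μ : Measure X) [IsFiniteMeasure μ]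
    (hmeas : ∀ g : G, Measurable (g • · : X → X)) {σ ρ : X → ℕ} (hσ : Measurable σ)
    (hρ : Measurable ρ) (hgen : IsGenerating G μ σ) {P : Finset ℕ} (hρP : ∀ x, ρ x ∈ P)
    (F₀ : Finset G) {ε : ℝ≥0∞} (hε : 0 < ε) :
    ∃ F, F₀ ⊆ F ∧ ∃ f : ℕ → ℕ, (∀ n, f n ∈ insert 0 P) ∧
      μ {x | ρ x ≠ f (joinOver F σ x)} ≤ ε := by
  classical
  have hatom : ∀ i, ∃ D ∈ cylinders G σ, μ (D ∆ (ρ ⁻¹' {i})) < ε / P.card := by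
    intro i
    obtain ⟨t, ht, hρt⟩ := hgen _ (hρ (measurableSet_singleton i))
    obtain ⟨D, hD, hDt⟩ := exists_mem_cylinders_symmDiff_lt μ hmeas hσ ht
      (ENNReal.div_pos hε.ne' (ENNReal.natCast_ne_top _))
    refine ⟨D, hD, (measure_symmDiff_le _ t _).trans_lt ?_⟩
    rwa [symmDiff_comm t, hρt, add_zero]
  choose D hD hDε using hatom
  choose W J hWJ using hD
  refine ⟨F₀ ∪ P.biUnion W, Finset.subset_union_left, ?_⟩
  obtain ⟨f, hf, hfε⟩ := exists_measure_ne_comp_le μ hρP D (τ := joinOver (F₀ ∪ P.biUnion W) σ)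
    (fun i hi => hWJ i ▸ (joinOver_factorsThrough_of_subset (Finset.subset_union_right.trans'
      (Finset.subset_biUnion_of_mem W hi)) σ).comp_left (· ∈ J i)) 0
  refine ⟨f, hf, hfε.trans ?_⟩
  calc ∑ i ∈ P, μ (D i ∆ (ρ ⁻¹' {i})) ≤ ∑ _i ∈ P, ε / P.card :=
        Finset.sum_le_sum fun i _ => (hDε i).le
    _ ≤ ε := by rw [Finset.sum_const, nsmul_eq_mul]; exact ENNReal.mul_div_le

end Approximation

section Entropy

open Filter Topology

theorem negMulLog_monotoneOn : MonotoneOn negMulLog (Set.Icc 0 (exp (-1))) := by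
  refine monotoneOn_of_deriv_nonneg (convex_Icc _ _) continuous_negMulLog.continuousOn ?_ ?_ <;>
    rw [interior_Icc]
  · exact fun x hx => (differentiableAt_negMulLog hx.1.ne').differentiableWithinAt
  · intro x hx
    rw [deriv_negMulLog hx.1.ne']
    linarith [(log_le_iff_le_exp hx.1).2 hx.2.le]

theorem neg_mul_log_div_le {m M η : ℝ} (hm : 0 ≤ m) (hmM : m ≤ M) (hM : M ≤ 1)
    (hη : η ∈ Set.Icc 0 (exp (-1))) (h : M - m ≤ η ∨ m ≤ η) :
    -(m * log (m / M)) ≤ η + negMulLog η := by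
  have hη1 : η ≤ 1 := hη.2.trans (exp_le_one_iff.2 (by norm_num))
  have hnegMulLog : 0 ≤ negMulLog η := negMulLog_nonneg hη.1 hη1
  rcases hm.eq_or_lt with rfl | hm
  · simpa using add_nonneg hη.1 hnegMulLog
  have hM0 : 0 < M := hm.trans_le hmM
  rw [← inv_div, log_inv, mul_neg, neg_neg]
  rcases h with h | h
  · calc m * log (M / m) ≤ m * (M / m - 1) :=
          mul_le_mul_of_nonneg_left (log_le_sub_one_of_pos (by positivity)) hm.le
      _ = M - m := by field_simp
      _ ≤ η + negMulLog η := by linarith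
  · calc m * log (M / m) ≤ m * log (1 / m) :=
          mul_le_mul_of_nonneg_left (log_le_log (by positivity) (by gcongr)) hm.le
      _ = negMulLog m := by rw [one_div, log_inv, negMulLog]; ring
      _ ≤ negMulLog η := negMulLog_monotoneOn ⟨hm.le, h.trans hη.2⟩ hη h
      _ ≤ η + negMulLog η := le_add_of_nonneg_left hη.1

variable {X : Type*} [MeasurableSpace X]

theorem condEntropy_le_of_measure_ne_le (μ : Measure X) [IsProbabilityMeasure μ]
    {ι κ : Type*} {u : X → ι} {v : X → κ} {P : Finset ι} {Q : Finset κ} (hu : ∀ x, u x ∈ P)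
    (hv : ∀ x, v x ∈ Q) (ρ : κ → ι) {η : ℝ} (hη : η ∈ Set.Icc 0 (exp (-1)))
    (hclose : μ {x | u x ≠ ρ (v x)} ≤ ENNReal.ofReal η) :
    condEntropy μ u v ≤ P.card * Q.card * (η + negMulLog η) := by
  have hbad : ∀ s ⊆ {x | u x ≠ ρ (v x)}, (μ s).toReal ≤ η := fun s hs =>
    ENNReal.toReal_le_of_le_ofReal hη.1 ((measure_mono hs).trans hclose)
  have hcell : ∀ p : ι × κ, -((μ (u ⁻¹' {p.1} ∩ v ⁻¹' {p.2})).toReal *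
      log ((μ (u ⁻¹' {p.1} ∩ v ⁻¹' {p.2})).toReal / (μ (v ⁻¹' {p.2})).toReal)) ≤
      η + negMulLog η := by
    rintro ⟨i, j⟩
    refine neg_mul_log_div_le ENNReal.toReal_nonneg
      (ENNReal.toReal_mono (measure_ne_top μ _) (measure_mono Set.inter_subset_right))
      (ENNReal.toReal_le_of_le_ofReal zero_le_one (by simpa using prob_le_one)) hη ?_
    by_cases hij : i = ρ j
    · left
      have hsplit := ENNReal.toReal_mono
        (ENNReal.add_ne_top.2 ⟨measure_ne_top μ _, measure_ne_top μ _⟩)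
        (measure_le_inter_add_sdiff μ (v ⁻¹' {j}) (u ⁻¹' {i}))
      rw [ENNReal.toReal_add (measure_ne_top μ _) (measure_ne_top μ _), Set.inter_comm] at hsplit
      have := hbad (v ⁻¹' {j} \ u ⁻¹' {i}) fun x ⟨hxj, hxi⟩ hx =>
        hxi (hx.trans (by rw [show v x = j from hxj, ← hij]))
      simp only at hsplit ⊢
      linarith
    · exact Or.inr (hbad _ fun x ⟨hxi, hxj⟩ hx =>
        hij (hxi.symm.trans (hx.trans (by rw [show v x = j from hxj]))))
  have hzero : ∀ p ∉ P ×ˢ Q, -((μ (u ⁻¹' {p.1} ∩ v ⁻¹' {p.2})).toReal *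
      log ((μ (u ⁻¹' {p.1} ∩ v ⁻¹' {p.2})).toReal / (μ (v ⁻¹' {p.2})).toReal)) = 0 := by
    rintro ⟨i, j⟩ hp
    have hempty : u ⁻¹' {i} ∩ v ⁻¹' {j} = ∅ :=
      Set.eq_empty_of_forall_notMem fun x ⟨hxi, hxj⟩ =>
        hp (Finset.mem_product.2 ⟨hxi ▸ hu x, hxj ▸ hv x⟩)
    simp [hempty]
  rw [condEntropy, tsum_eq_sum hzero]
  calc _ ≤ (P ×ˢ Q).card • (η + negMulLog η) :=
        Finset.sum_le_card_nsmul _ _ _ fun p _ => hcell p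
    _ = P.card * Q.card * (η + negMulLog η) := by
        rw [Finset.card_product, nsmul_eq_mul]; push_cast; ring

theorem exists_mul_add_negMulLog_lt (C : ℝ) {ε : ℝ} (hε : 0 < ε) :
    ∃ η ∈ Set.Ioc 0 (exp (-1)), C * (η + negMulLog η) < ε := by
  have hlim : Tendsto (fun η => C * (η + negMulLog η)) (𝓝[>] 0) (𝓝 0) := by
    have := ((continuous_id.add continuous_negMulLog).const_mul C).tendsto 0
    simpa using this.mono_left nhdsWithin_le_nhds
  obtain ⟨η, hηε, hη⟩ := ((hlim.eventually (gt_mem_nhds hε)).and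
    (Ioc_mem_nhdsGT (exp_pos (-1)))).exists
  exact ⟨η, hη, hηε⟩

theorem exists_rokhlin_lt (μ : Measure X) [IsProbabilityMeasure μ] {ι κ : Type*}
    (P : Finset ι) (Q : Finset κ) {ε : ℝ} (hε : 0 < ε) :
    ∃ δ : ℝ≥0∞, 0 < δ ∧ ∀ (u : X → ι) (v : X → κ), (∀ x, u x ∈ P) → (∀ x, v x ∈ Q) →
      ∀ (ρ : κ → ι) (ρ' : ι → κ), μ {x | u x ≠ ρ (v x)} ≤ δ → μ {x | v x ≠ ρ' (u x)} ≤ δ →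
        rokhlin μ u v < ε := by
  obtain ⟨η, hη, hηε⟩ := exists_mul_add_negMulLog_lt (2 * P.card * Q.card) hε
  refine ⟨ENNReal.ofReal η, ENNReal.ofReal_pos.2 hη.1, fun u v hu hv ρ ρ' huv hvu => ?_⟩
  have h₁ := condEntropy_le_of_measure_ne_le μ hu hv ρ (Set.Ioc_subset_Icc_self hη) huv
  have h₂ := condEntropy_le_of_measure_ne_le μ hv hu ρ' (Set.Ioc_subset_Icc_self hη) hvu
  rw [rokhlin]
  linarith

end Entropy

section Patch

variable {X : Type*} {G : Type*} [Group G] [MulAction G X]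

theorem _root_.Function.FactorsThrough.refinesI [MeasurableSpace X] {ι κ : Type*} [Nonempty κ]
    {a : X → ι} {b : X → κ} (h : b.FactorsThrough a) (μ : Measure X) : RefinesI μ a b := by
  obtain ⟨e, he⟩ := (factorsThrough_iff b).1 h
  exact ⟨e, ae_of_all μ fun x => congrFun he x⟩

def correction (α p : X → ℕ) : X → ℕ := fun x => if α x = p x then 0 else α x + 1

theorem eq_ite_correction (α p : X → ℕ) (x : X) :
    α x = if correction α p x = 0 then p x else correction α p x - 1 := by
  unfold correction
  split_ifs <;> simp_all

noncomputable def patch (K : Finset G) (h : ℕ → ℕ) (α β' : X → ℕ) : X → ℕ :=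
  joinN β' (correction α (h ∘ joinOver K β'))

variable {K F : Finset G} {h : ℕ → ℕ} {α β' : X → ℕ}

theorem factorsThrough_joinOver_patch (h1K : 1 ∈ K) :
    α.FactorsThrough (joinOver K (patch K h α β')) := by
  intro x y hxy
  have hpatch : patch K h α β' x = patch K h α β' y := by
    rw [← smulPart_one (G := G) (patch K h α β')]
    exact smulPart_factorsThrough_joinOver h1K _ hxy
  have hβ' : β'.FactorsThrough (patch K h α β') := fun _ _ hp => (Nat.pair_eq_pair.1 hp).1
  have hguess : (h ∘ joinOver K β') x = (h ∘ joinOver K β') y :=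
    congrArg h (hβ'.joinOver K hxy)
  rw [eq_ite_correction α (h ∘ joinOver K β') x, eq_ite_correction α (h ∘ joinOver K β') y,
    (Nat.pair_eq_pair.1 hpatch).2, hguess]

theorem patch_factorsThrough_joinOver_mul [DecidableEq G] (h1K : 1 ∈ K) (h1F : 1 ∈ F)
    (hβ' : β'.FactorsThrough (joinOver F α)) :
    (patch K h α β').FactorsThrough (joinOver (K * F) α) := by
  have hα : α.FactorsThrough (joinOver (K * F) α) := by
    have := smulPart_factorsThrough_joinOver (by simpa using Finset.mul_mem_mul h1K h1F) α
    rwa [smulPart_one] at this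
  refine joinN_factorsThrough
    (hβ'.trans (joinOver_factorsThrough_of_subset (Finset.subset_mul_right F h1K) α))
    fun x y hxy => ?_
  simp only [correction, Function.comp_apply, hα hxy, hβ'.joinOver_mul K hxy]

theorem combEquiv_patch [MeasurableSpace X] (μ : Measure X) (h1K : 1 ∈ K) (h1F : 1 ∈ F)
    (hβ' : β'.FactorsThrough (joinOver F α)) : CombEquiv G μ α (patch K h α β') := by
  classical
  exact ⟨K, K * F, (factorsThrough_joinOver_patch h1K).refinesI μ,
    (patch_factorsThrough_joinOver_mul h1K h1F hβ').refinesI μ⟩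

theorem patch_mem_image₂ {P Q : Finset ℕ} (hα : ∀ x, α x ∈ P) (hβ' : ∀ x, β' x ∈ insert 0 Q)
    (x : X) :
    patch K h α β' x ∈ Finset.image₂ Nat.pair (insert 0 Q) (insert 0 (P.image (· + 1))) := by
  refine Finset.mem_image₂_of_mem (hβ' x) ?_
  unfold correction
  split_ifs
  · exact Finset.mem_insert_self 0 _
  · exact Finset.mem_insert_of_mem (Finset.mem_image_of_mem _ (hα x))

variable [MeasurableSpace X]

theorem measurable_patch (hmeas : ∀ g : G, Measurable (g • · : X → X)) (hα : Measurable α)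
    (hβ' : Measurable β') : Measurable (patch K h α β') := by
  have hguess : Measurable (h ∘ joinOver K β') :=
    Measurable.of_discrete.comp (measurable_joinOver fun g _ => hβ'.comp (hmeas g⁻¹))
  exact measurable_joinN hβ' <|
    (Measurable.of_discrete (f := fun q : ℕ × ℕ => if q.1 = q.2 then 0 else q.1 + 1)).comp
      (hα.prodMk hguess)

theorem measure_joinOver_ne_le (μ : Measure X)
    (hmp : ∀ g : G, MeasurePreserving (g • · : X → X) μ μ) (K : Finset G) (φ ψ : X → ℕ) :
    μ {x | joinOver K φ x ≠ joinOver K ψ x} ≤ K.card * μ {x | φ x ≠ ψ x} := by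
  calc μ {x | joinOver K φ x ≠ joinOver K ψ x}
      ≤ μ (⋃ g ∈ K, (g⁻¹ • · : X → X) ⁻¹' {x | φ x ≠ ψ x}) := by
        refine measure_mono fun x hx => ?_
        by_contra hgood
        simp only [Set.mem_iUnion, Set.mem_preimage, Set.mem_ofPred_eq, not_exists, not_not]
          at hgood
        exact hx (joinOver_apply_congr hgood)
    _ ≤ ∑ g ∈ K, μ ((g⁻¹ • · : X → X) ⁻¹' {x | φ x ≠ ψ x}) := measure_biUnion_finset_le _ _
    _ ≤ ∑ _g ∈ K, μ {x | φ x ≠ ψ x} := Finset.sum_le_sum fun g _ =>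
        (Measure.le_map_apply (hmp g⁻¹).measurable.aemeasurable _).trans_eq
          (by rw [(hmp g⁻¹).map_eq])
    _ = K.card * μ {x | φ x ≠ ψ x} := by rw [Finset.sum_const, nsmul_eq_mul]

theorem measure_patch_ne_le (μ : Measure X)
    (hmp : ∀ g : G, MeasurePreserving (g • · : X → X) μ μ) (β : X → ℕ) :
    μ {x | patch K h α β' x ≠ Nat.pair (β x) 0} ≤
      μ {x | α x ≠ h (joinOver K β x)} + (K.card + 1) * μ {x | β x ≠ β' x} := by
  have hsub : {x | patch K h α β' x ≠ Nat.pair (β x) 0} ⊆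
      {x | β x ≠ β' x} ∪ {x | α x ≠ h (joinOver K β x)} ∪
        {x | joinOver K β' x ≠ joinOver K β x} := by
    intro x hx
    by_contra hgood
    simp only [Set.mem_union, Set.mem_ofPred_eq, not_or, not_not] at hgood
    obtain ⟨⟨hβ, hα⟩, hK⟩ := hgood
    exact hx (by simp [patch, joinN, correction, hβ, hα, hK])
  calc _ ≤ μ {x | β x ≠ β' x} + μ {x | α x ≠ h (joinOver K β x)} +
        K.card * μ {x | β' x ≠ β x} :=
        (measure_mono hsub).trans <| (measure_union_le _ _).trans <|
          add_le_add (measure_union_le _ _) (measure_joinOver_ne_le μ hmp K β' β)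
    _ = _ := by simp_rw [ne_comm (a := β' _)]; ring

end Patch

theorem exists_combEquiv_near {X : Type*} [MeasurableSpace X] {G : Type*} [Group G]
    [MulAction G X] (μ : Measure X) [IsFiniteMeasure μ]
    (hmp : ∀ g : G, MeasurePreserving (g • · : X → X) μ μ) {α β : X → ℕ} (hα : Measurable α)
    (hβ : Measurable β) (hgenα : IsGenerating G μ α) (hgenβ : IsGenerating G μ β)
    {P Q : Finset ℕ} (hαP : ∀ x, α x ∈ P) (hβQ : ∀ x, β x ∈ Q) {δ : ℝ≥0∞} (hδ : 0 < δ) :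
    ∃ γ : X → ℕ, Measurable γ ∧
      (∀ x, γ x ∈ Finset.image₂ Nat.pair (insert 0 Q) (insert 0 (P.image (· + 1)))) ∧
      CombEquiv G μ α γ ∧ μ {x | γ x ≠ Nat.pair (β x) 0} ≤ δ ∧
      μ {x | β x ≠ (γ x).unpair.1} ≤ δ := by
  have hmeas : ∀ g : G, Measurable (g • · : X → X) := fun g => (hmp g).measurable
  obtain ⟨K, h1K, h, -, hαK⟩ := exists_joinOver_predictor μ hmeas hβ hα hgenβ hαP {1}
    (ENNReal.half_pos hδ.ne')
  obtain ⟨F, h1F, f, hfQ, hβF⟩ := exists_joinOver_predictor μ hmeas hα hβ hgenα hβQ {1}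
    (ε := δ / 2 / (K.card + 1)) (ENNReal.div_pos (ENNReal.half_pos hδ.ne').ne' (by simp))
  have hβ' : Measurable fun x => f (joinOver F α x) :=
    Measurable.of_discrete.comp (measurable_joinOver fun g _ => hα.comp (hmeas g⁻¹))
  refine ⟨patch K h α fun x => f (joinOver F α x), measurable_patch hmeas hα hβ',
    patch_mem_image₂ hαP fun x => hfQ _,
    combEquiv_patch μ (by simpa using h1K) (by simpa using h1F)
      (FactorsThrough.rfl.comp_left f), ?_, ?_⟩
  · calc _ ≤ _ := measure_patch_ne_le μ hmp β
      _ ≤ δ / 2 + (K.card + 1) * (δ / 2 / (K.card + 1)) := by gcongr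
      _ ≤ δ / 2 + δ / 2 := by gcongr; exact ENNReal.mul_div_le
      _ = δ := ENNReal.add_halves δ
  · calc _ ≤ δ / 2 / (K.card + 1) := by simpa [patch, joinN] using hβF
      _ ≤ δ / 2 := ENNReal.div_le_of_le_mul (le_mul_of_one_le_right' (by simp))
      _ ≤ δ := ENNReal.half_le_self

end Bowen

theorem combEquiv_dense_general {X : Type*} [MeasurableSpace X] {G : Type*} [Group G]
    [MulAction G X] (μ : Measure X) [IsProbabilityMeasure μ]
    (hmp : ∀ g : G, MeasurePreserving (fun x : X => g • x) μ μ)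
    (α : X → ℕ) (hα : IsFinPart α) (hgenα : IsGenerating G μ α)
    (β : X → ℕ) (hβ : IsFinPart β) (hgenβ : IsGenerating G μ β)
    (ε : ℝ) (hε : 0 < ε) :
    ∃ γ : X → ℕ, IsFinPart γ ∧ CombEquiv G μ α γ ∧ rokhlin μ γ β < ε := by
  obtain ⟨P, hαP⟩ : ∃ P : Finset ℕ, ∀ x, α x ∈ P := ⟨hα.2.toFinset, by simp⟩
  obtain ⟨Q, hβQ⟩ : ∃ Q : Finset ℕ, ∀ x, β x ∈ Q := ⟨hβ.2.toFinset, by simp⟩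
  obtain ⟨δ, hδ, hclose⟩ := exists_rokhlin_lt μ
    (Finset.image₂ Nat.pair (insert 0 Q) (insert 0 (P.image (· + 1)))) Q hε
  obtain ⟨γ, hγ, hγR, hαγ, hγβ, hβγ⟩ :=
    exists_combEquiv_near μ hmp hα.1 hβ.1 hgenα hgenβ hαP hβQ hδ
  exact ⟨γ, ⟨hγ, (Finset.finite_toSet _).subset (Set.range_subset_iff.2 hγR)⟩, hαγ,
    hclose γ β hγR hβQ (Nat.pair · 0) (·.unpair.1) hγβ hβγ⟩

/-- Theorem 3.3: for a finite generating partition `α`, the set of finite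
partitions combinatorially equivalent to `α` is dense, for the Rokhlin metric, in the set
of all finite generating partitions. -/
theorem combEquiv_dense {X : Type*} [MeasurableSpace X] {G : Type*} [Group G]
    [Countable G] [MulAction G X] (μ : Measure X) [IsProbabilityMeasure μ]
    (hmp : ∀ g : G, MeasurePreserving (fun x : X => g • x) μ μ)
    (α : X → ℕ) (hα : IsFinPart α) (hgenα : IsGenerating G μ α)
    (β : X → ℕ) (hβ : IsFinPart β) (hgenβ : IsGenerating G μ β)
    (ε : ℝ) (hε : 0 < ε) :
    ∃ γ : X → ℕ, IsFinPart γ ∧ CombEquiv G μ α γ ∧ rokhlin μ γ β < ε :=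
  combEquiv_dense_general μ hmp α hα hgenα β hβ hgenβ ε hε
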